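/- arXiv:1501.00395 — 4 statements merged into one kernel-verified Lean document; each statement's English description precedes it below -/
import Mathlib

section
/- Let {α, S₀, ϑ₁, ϑ₂} be an admissible quadruple, and for x ≥ 0 set Λ(x) = [e^{-ixα}ϑ₁, e^{ixα}ϑ₂] and S(x) = S₀ + ∫₀ˣ Λ(t) j Λ(t)* dt. Then for every x ≥ 0 one has the identity αS(x) − S(x)α* = iΛ(x)Λ(x)*, the matrix e^{-ixα}S(x)e^{ixα*} − S₀ is positive semidefinite, and S(x) is positive definite; consequently the quadruple Σ(x) = {α, S(x), e^{-ixα}ϑ₁, e^{ixα}ϑ₂} is admissible for every x ≥ 0. -/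
open Matrix
open scoped ComplexOrder

/-- The `m×m` signature matrix `j = diag(I_{m₁}, −I_{m₂})`. -/
noncomputable def sigJ (m₁ m₂ : ℕ) : Matrix (Fin m₁ ⊕ Fin m₂) (Fin m₁ ⊕ Fin m₂) ℂ :=
  Matrix.fromBlocks 1 0 0 (-1)

/-- A quadruple `{α, S₀, ϑ₁, ϑ₂}` is admissible if `S₀` is Hermitian positive definite and
`αS₀ − S₀α* = i(ϑ₁ϑ₁* + ϑ₂ϑ₂*)`. -/
def Admissible {n m₁ m₂ : ℕ} (α S₀ : Matrix (Fin n) (Fin n) ℂ)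
    (θ₁ : Matrix (Fin n) (Fin m₁) ℂ) (θ₂ : Matrix (Fin n) (Fin m₂) ℂ) : Prop :=
  S₀.PosDef ∧ α * S₀ - S₀ * αᴴ = Complex.I • (θ₁ * θ₁ᴴ + θ₂ * θ₂ᴴ)

/-!
Write `U(x) = e^{-ixα}`, `X = Uϑ₁(Uϑ₁)*` and `Y = U⁻¹ϑ₂(U⁻¹ϑ₂)*`, so that `ΛΛ* = X + Y`,
`S' = ΛjΛ* = X − Y`, `X' = −i(αX − Xα*)` and `Y' = i(αY − Yα*)`. Then `αS − Sα* − i(X + Y)`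
has derivative zero and vanishes at `0` by admissibility, which is the first identity.
Feeding it into the product rule gives `(USU*)' = U(X + Y + X − Y)U* = 2UXU* ≥ 0`, so
`USU* − S₀` is positive semidefinite as the increment of a function with positive semidefinite
derivative. Hence `USU* ≥ S₀ > 0`, and `S` is positive definite, being congruent to `USU*`.
-/

open NormedSpace Complex

theorem Matrix.fromCols_mul_conjTranspose {R m n₁ n₂ : Type*} [Semiring R] [StarRing R]
    [Fintype n₁] [Fintype n₂] (A : Matrix m n₁ R) (B : Matrix m n₂ R) :
    fromCols A B * (fromCols A B)ᴴ = A * Aᴴ + B * Bᴴ := by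
  rw [conjTranspose_fromCols_eq_fromRows_conjTranspose, fromCols_mul_fromRows]

theorem fromCols_mul_sigJ_mul_conjTranspose {m : Type*} {m₁ m₂ : ℕ}
    (A : Matrix m (Fin m₁) ℂ) (B : Matrix m (Fin m₂) ℂ) :
    fromCols A B * sigJ m₁ m₂ * (fromCols A B)ᴴ = A * Aᴴ - B * Bᴴ := by
  rw [sigJ, fromCols_mul_fromBlocks, conjTranspose_fromCols_eq_fromRows_conjTranspose,
    fromCols_mul_fromRows]
  simp [sub_eq_add_neg]

theorem Complex.monotone_of_hasDerivAt_nonneg {f f' : ℝ → ℂ}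
    (hf : ∀ t, HasDerivAt f (f' t) t) (hf' : ∀ t, 0 ≤ f' t) : Monotone f := by
  have hre : Monotone fun t => (f t).re :=
    _root_.monotone_of_hasDerivAt_nonneg (fun t => reCLM.hasFDerivAt.comp_hasDerivAt t (hf t))
      fun t => (le_def.1 (hf' t)).1
  have him : ∀ t, HasDerivAt (fun s => (f s).im) 0 t := fun t =>
    (imCLM.hasFDerivAt.comp_hasDerivAt t (hf t)).congr_deriv (le_def.1 (hf' t)).2.symm
  exact fun s t hst => le_def.2 ⟨hre hst,
    is_const_of_deriv_eq_zero (fun t => (him t).differentiableAt) (fun t => (him t).deriv) s t⟩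

theorem Matrix.hasDerivAt_of_apply_eq_add_integral {m n : Type*} [Fintype m] [Fintype n]
    {S F : ℝ → Matrix m n ℂ} {S₀ : Matrix m n ℂ} (hF : Continuous F)
    (hS : ∀ x i j, S x i j = S₀ i j + ∫ t in (0 : ℝ)..x, F t i j) (x : ℝ) :
    HasDerivAt S (F x) x :=
  hasDerivAt_pi.2 fun i => hasDerivAt_pi.2 fun j => by
    simpa only [hS] using
      ((hF.matrix_elem i j).integral_hasStrictDerivAt 0 x).hasDerivAt.const_add (S₀ i j)

/- Matrices carry no global norm. The product rule and the derivative of `exp` need a normed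
algebra structure, and any one will do: `HasDerivAt` only sees the product topology. -/
attribute [local instance] Matrix.linftyOpNormedAddCommGroup Matrix.linftyOpNormedSpace
  Matrix.linftyOpNormedRing Matrix.linftyOpNormedAlgebra

section Evolution

variable {n : Type*} [Fintype n] [DecidableEq n]

-- Over `ℂ` a nonnegative quadratic form is real-valued, which already forces `A` to be Hermitian.
theorem Matrix.posSemidef_iff_dotProduct_mulVec_nonneg {A : Matrix n n ℂ} :
    A.PosSemidef ↔ ∀ x, 0 ≤ star x ⬝ᵥ (A *ᵥ x) := by
  rw [← isPositive_toEuclideanLin_iff, LinearMap.isPositive_iff_complex]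
  refine ⟨fun h x => ?_, fun h x => ?_⟩
  · simpa [EuclideanSpace.inner_eq_star_dotProduct, Complex.nonneg_iff, Complex.ext_iff, eq_comm,
      dotProduct_star, dotProduct_comm (A *ᵥ _), and_comm] using h (WithLp.toLp 2 x)
  · simpa [EuclideanSpace.inner_eq_star_dotProduct, Complex.nonneg_iff, Complex.ext_iff, eq_comm,
      dotProduct_star, dotProduct_comm (A *ᵥ _), and_comm] using h x.ofLp

theorem Matrix.posSemidef_sub_of_hasDerivAt {T T' : ℝ → Matrix n n ℂ}
    (hT : ∀ t, HasDerivAt T (T' t) t) (hT' : ∀ t, (T' t).PosSemidef) {a b : ℝ} (hab : a ≤ b) :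
    (T b - T a).PosSemidef := by
  refine posSemidef_iff_dotProduct_mulVec_nonneg.2 fun v => ?_
  let q : Matrix n n ℂ →L[ℝ] ℂ := LinearMap.toContinuousLinearMap
    { toFun := fun M => star v ⬝ᵥ M *ᵥ v
      map_add' := fun M N => by simp [add_mulVec, dotProduct_add]
      map_smul' := fun c M => by simp [smul_mulVec, dotProduct_smul] }
  have hq := Complex.monotone_of_hasDerivAt_nonneg
    (fun t => q.hasFDerivAt.comp_hasDerivAt t (hT t)) fun t => (hT' t).dotProduct_mulVec_nonneg v
  simpa [q, sub_mulVec, dotProduct_sub, sub_nonneg] using hq hab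

theorem Matrix.posDef_of_posSemidef_conj_sub {S S₀ U : Matrix n n ℂ} (hU : IsUnit U)
    (hS₀ : S₀.PosDef) (h : (U * S * Uᴴ - S₀).PosSemidef) : S.PosDef := by
  have := hS₀.add_posSemidef h
  rwa [add_sub_cancel, ← star_eq_conjTranspose, hU.posDef_star_right_conjugate_iff] at this

theorem Matrix.exp_smul_conjTranspose (c : ℂ) (A : Matrix n n ℂ) :
    (exp (c • A))ᴴ = exp (star c • Aᴴ) := by
  rw [← exp_conjTranspose, conjTranspose_smul]

theorem Matrix.conjTranspose_exp_neg_I_mul_smul (α : Matrix n n ℂ) (t : ℝ) :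
    (exp ((-I * t) • α))ᴴ = exp ((I * t) • αᴴ) := by
  rw [exp_smul_conjTranspose, star_mul', Complex.star_def, conj_neg_I, conj_ofReal]

noncomputable def expGram {m : Type*} [Fintype m] (c : ℂ) (α : Matrix n n ℂ) (θ : Matrix n m ℂ)
    (t : ℝ) : Matrix n n ℂ :=
  exp ((c * t) • α) * θ * (exp ((c * t) • α) * θ)ᴴ

theorem posSemidef_expGram {m : Type*} [Fintype m] (c : ℂ) (α : Matrix n n ℂ)
    (θ : Matrix n m ℂ) (t : ℝ) : (expGram c α θ t).PosSemidef :=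
  posSemidef_self_mul_conjTranspose _

theorem Matrix.hasDerivAt_exp_ofReal_mul_smul (c : ℂ) (α : Matrix n n ℂ) (t : ℝ) :
    HasDerivAt (fun s : ℝ => exp ((c * s) • α)) (c • α * exp ((c * t) • α)) t := by
  have h : ∀ s : ℝ, (c * s) • α = s • (c • α) := fun s => by
    rw [← smul_assoc, real_smul, mul_comm]
  simp only [h]
  exact hasDerivAt_exp_smul_const' (c • α) t

theorem Matrix.hasDerivAt_exp_ofReal_mul_smul' (c : ℂ) (α : Matrix n n ℂ) (t : ℝ) :
    HasDerivAt (fun s : ℝ => exp ((c * s) • α)) (exp ((c * t) • α) * c • α) t := by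
  rw [← ((Commute.refl α).smul_left c).smul_right (c * t) |>.exp_right.eq]
  exact hasDerivAt_exp_ofReal_mul_smul c α t

theorem hasDerivAt_expGram {m : Type*} [Fintype m] {c : ℂ} (hc : star c = -c)
    (α : Matrix n n ℂ) (θ : Matrix n m ℂ) (t : ℝ) :
    HasDerivAt (expGram c α θ) (c • (α * expGram c α θ t - expGram c α θ t * αᴴ)) t := by
  have hfun : expGram c α θ =
      fun s : ℝ => exp ((c * s) • α) * (θ * θᴴ) * exp ((star c * s) • αᴴ) := by
    funext s
    simp only [expGram, conjTranspose_mul, exp_smul_conjTranspose, star_mul', Complex.star_def,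
      conj_ofReal, Matrix.mul_assoc]
  rw [hfun]
  refine (((hasDerivAt_exp_ofReal_mul_smul c α t).fun_mul (hasDerivAt_const t (θ * θᴴ))).fun_mul
    (hasDerivAt_exp_ofReal_mul_smul' (star c) αᴴ t)).congr_deriv ?_
  rw [hc]
  simp only [mul_zero, add_zero, Matrix.mul_assoc, smul_mul_assoc, neg_smul, Matrix.mul_neg,
    Matrix.mul_smul, smul_add, smul_neg, sub_eq_add_neg]

theorem commutator_eq_of_hasDerivAt {α : Matrix n n ℂ} {S X Y : ℝ → Matrix n n ℂ}
    (hS : ∀ t, HasDerivAt S (X t - Y t) t)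
    (hX : ∀ t, HasDerivAt X (-I • (α * X t - X t * αᴴ)) t)
    (hY : ∀ t, HasDerivAt Y (I • (α * Y t - Y t * αᴴ)) t)
    (h₀ : α * S 0 - S 0 * αᴴ = I • (X 0 + Y 0)) (t : ℝ) :
    α * S t - S t * αᴴ = I • (X t + Y t) := by
  have hD : ∀ t, HasDerivAt (fun t => α * S t - S t * αᴴ - I • (X t + Y t)) 0 t := fun t =>
    ((((hS t).const_mul α).sub ((hS t).mul_const αᴴ)).sub
      (((hX t).add (hY t)).const_smul I)).congr_deriv (by
        simp only [Matrix.mul_sub, Matrix.sub_mul, smul_add, smul_smul, mul_neg, I_mul_I]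
        module)
  have := is_const_of_deriv_eq_zero (fun t => (hD t).differentiableAt) (fun t => (hD t).deriv) t 0
  rwa [h₀, sub_self, sub_eq_zero] at this

theorem hasDerivAt_exp_mul_mul_conjTranspose {α : Matrix n n ℂ} {S : ℝ → Matrix n n ℂ}
    {X Y : Matrix n n ℂ} {t : ℝ} (hS : HasDerivAt S (X - Y) t)
    (hcomm : α * S t - S t * αᴴ = I • (X + Y)) :
    HasDerivAt (fun s : ℝ => exp ((-I * s) • α) * S s * (exp ((-I * s) • α))ᴴ)
      (exp ((-I * t) • α) * (X + X) * (exp ((-I * t) • α))ᴴ) t := by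
  have key : (-I • α) * S t + (X - Y) + S t * (I • αᴴ) = X + X :=
    calc (-I • α) * S t + (X - Y) + S t * (I • αᴴ) = -I • (α * S t - S t * αᴴ) + (X - Y) := by
          simp only [Matrix.smul_mul, Matrix.mul_smul, Matrix.neg_mul, smul_sub, neg_smul]; abel
      _ = X + X := by rw [hcomm, smul_smul, neg_mul, I_mul_I, neg_neg, one_smul]; abel
  simp only [conjTranspose_exp_neg_I_mul_smul]
  refine (((hasDerivAt_exp_ofReal_mul_smul' (-I) α t).fun_mul hS).fun_mul
    (hasDerivAt_exp_ofReal_mul_smul I αᴴ t)).congr_deriv ?_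
  rw [← key]
  simp only [Matrix.mul_add, Matrix.add_mul, Matrix.mul_assoc]

end Evolution

/-- for an admissible quadruple `{α, S₀, ϑ₁, ϑ₂}`, with
`Λ(x) = [e^{-ixα}ϑ₁, e^{ixα}ϑ₂]` and `S(x) = S₀ + ∫₀ˣ Λ(t) j Λ(t)* dt`, one has
`αS(x) − S(x)α* = iΛ(x)Λ(x)*`, `e^{-ixα}S(x)e^{ixα*} − S₀ ≥ 0`, `S(x) > 0`, and the
quadruple `Σ(x) = {α, S(x), e^{-ixα}ϑ₁, e^{ixα}ϑ₂}` is admissible, for every `x ≥ 0`. -/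
theorem admissible_evolution_continuous
    {n m₁ m₂ : ℕ} (α S₀ : Matrix (Fin n) (Fin n) ℂ)
    (θ₁ : Matrix (Fin n) (Fin m₁) ℂ) (θ₂ : Matrix (Fin n) (Fin m₂) ℂ)
    (hadm : Admissible α S₀ θ₁ θ₂)
    (Λ : ℝ → Matrix (Fin n) (Fin m₁ ⊕ Fin m₂) ℂ)
    (hΛ : ∀ x : ℝ, Λ x = Matrix.fromCols
      (NormedSpace.exp ((-(Complex.I * (x : ℂ))) • α) * θ₁)
      (NormedSpace.exp ((Complex.I * (x : ℂ)) • α) * θ₂))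
    (S : ℝ → Matrix (Fin n) (Fin n) ℂ)
    (hS : ∀ (x : ℝ) (i j : Fin n),
      S x i j = S₀ i j + ∫ t in (0:ℝ)..x, (Λ t * sigJ m₁ m₂ * (Λ t)ᴴ) i j) :
    ∀ x : ℝ, 0 ≤ x →
      (α * S x - S x * αᴴ = Complex.I • (Λ x * (Λ x)ᴴ)) ∧
      (NormedSpace.exp ((-(Complex.I * (x : ℂ))) • α) * S x *
        NormedSpace.exp ((Complex.I * (x : ℂ)) • αᴴ) - S₀).PosSemidef ∧
      (S x).PosDef ∧
      Admissible α (S x)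
        (NormedSpace.exp ((-(Complex.I * (x : ℂ))) • α) * θ₁)
        (NormedSpace.exp ((Complex.I * (x : ℂ)) • α) * θ₂) := by
  simp only [← neg_mul] at hΛ ⊢
  obtain ⟨hS₀, hα⟩ := hadm
  have hΛΛ : ∀ t, Λ t * (Λ t)ᴴ = expGram (-I) α θ₁ t + expGram I α θ₂ t := fun t => by
    rw [hΛ, fromCols_mul_conjTranspose]; rfl
  have hΛjΛ : ∀ t, Λ t * sigJ m₁ m₂ * (Λ t)ᴴ = expGram (-I) α θ₁ t - expGram I α θ₂ t :=
    fun t => by rw [hΛ, fromCols_mul_sigJ_mul_conjTranspose]; rfl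
  have hX := hasDerivAt_expGram (c := -I) (by simp) α θ₁
  have hY := hasDerivAt_expGram (c := I) (by simp) α θ₂
  have hS' : ∀ t, HasDerivAt S (expGram (-I) α θ₁ t - expGram I α θ₂ t) t := by
    have hF : Continuous fun t => Λ t * sigJ m₁ m₂ * (Λ t)ᴴ := by
      simp only [hΛjΛ]
      exact continuous_iff_continuousAt.2 fun t => ((hX t).sub (hY t)).continuousAt
    simpa only [hΛjΛ] using hasDerivAt_of_apply_eq_add_integral hF hS
  have hS0 : S 0 = S₀ := by ext i j; simp [hS]
  have hcomm : ∀ t, α * S t - S t * αᴴ = I • (expGram (-I) α θ₁ t + expGram I α θ₂ t) :=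
    commutator_eq_of_hasDerivAt hS' hX hY (by simpa [hS0, expGram] using hα)
  intro x hx
  rw [← conjTranspose_exp_neg_I_mul_smul]
  have hpsd : (exp ((-I * x) • α) * S x * (exp ((-I * x) • α))ᴴ - S₀).PosSemidef := by
    simpa [hS0] using posSemidef_sub_of_hasDerivAt
      (fun t => hasDerivAt_exp_mul_mul_conjTranspose (hS' t) (hcomm t))
      (fun t => ((posSemidef_expGram _ _ _ t).add
        (posSemidef_expGram _ _ _ t)).mul_mul_conjTranspose_same _) hx
  have hpd := posDef_of_posSemidef_conj_sub (Matrix.isUnit_exp _) hS₀ hpsd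
  exact ⟨by rw [hΛΛ, hcomm], hpsd, hpd, hpd, hcomm x⟩
end

section
/- Let α be an invertible n×n complex matrix, let S₀ be a Hermitian n×n matrix, and let Λ₀ be an n×m matrix such that αS₀ − S₀α* = iΛ₀Λ₀*. Define recursively Λ_{k+1} = Λ_k + iα⁻¹Λ_k j and S_{k+1} = S_k + α⁻¹S_kα^{−*} + α⁻¹Λ_k j Λ_k* α^{−*} for k ∈ ℕ₀, where α^{−*} = (α⁻¹)*. Then for every k ∈ ℕ₀ one has αS_k − S_kα* = iΛ_kΛ_k*. -/
open Matrix
open scoped ComplexOrder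

/-! Writing `β = α⁻¹`, `P = Λ j Λ*` and `Q = Λ Λ*`, conjugating the identity by `β` gives
`S β* − β S = i β Q β*`, while `j* = j` and `j² = 1` give
`Λ' Λ'* = Q + β Q β* + i (β P − P β*)` for `Λ' = Λ + i β Λ j`. Adding the conjugated identity
to the old one is then exactly the identity for `S' = S + β S β* + β P β*`, so the step is an
identity in the ℂ-algebra of `n×n` matrices that only uses `αβ = βα = 1`. -/

theorem sigJ_conjTranspose (m₁ m₂ : ℕ) : (sigJ m₁ m₂)ᴴ = sigJ m₁ m₂ := by
  simp [sigJ, fromBlocks_conjTranspose]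

theorem sigJ_mul_self (m₁ m₂ : ℕ) : sigJ m₁ m₂ * sigJ m₁ m₂ = 1 := by
  simp [sigJ, fromBlocks_multiply]

section Algebra

variable {A : Type*} [Ring A] [Algebra ℂ A]

theorem conj_sub_eq_I_smul_of_sub_eq_I_smul {a b a' b' S Q : A} (hba : b * a = 1) (ha'b' : a' * b' = 1)
    (h : a * S - S * a' = Complex.I • Q) : S * b' - b * S = Complex.I • (b * Q * b') := by
  calc S * b' - b * S = b * (a * S - S * a') * b' := by
        simp only [mul_sub, sub_mul, mul_assoc, ha'b', mul_one]
        rw [← mul_assoc b a, hba, one_mul]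
    _ = Complex.I • (b * Q * b') := by rw [h, mul_smul_comm, smul_mul_assoc]

theorem sub_eq_I_smul_step {a b a' b' S Q P : A} (hab : a * b = 1) (hba : b * a = 1)
    (ha'b' : a' * b' = 1) (hb'a' : b' * a' = 1) (h : a * S - S * a' = Complex.I • Q) :
    a * (S + b * S * b' + b * P * b') - (S + b * S * b' + b * P * b') * a' =
      Complex.I • (Q + b * Q * b' + Complex.I • (b * P - P * b')) := by
  have hconj := conj_sub_eq_I_smul_of_sub_eq_I_smul hba ha'b' h
  have hab' (x : A) : a * (b * x) = x := by rw [← mul_assoc, hab, one_mul]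
  calc _ = (a * S - S * a') + (S * b' - b * S) + (P * b' - b * P) := by
        simp only [mul_add, add_mul, mul_assoc, hab', hb'a', mul_one]
        abel
    _ = _ := by
        rw [h, hconj, smul_add, smul_add, smul_smul, Complex.I_mul_I, neg_one_smul]
        abel

end Algebra

theorem mul_conjTranspose_add_I_smul {n m : Type*} [Fintype n] [Fintype m] [DecidableEq m]
    (β : Matrix n n ℂ) (Λ : Matrix n m ℂ) {J : Matrix m m ℂ} (hJ : Jᴴ = J) (hJJ : J * J = 1) :
    (Λ + Complex.I • (β * Λ * J)) * (Λ + Complex.I • (β * Λ * J))ᴴ =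
      Λ * Λᴴ + β * (Λ * Λᴴ) * βᴴ + Complex.I • (β * (Λ * J * Λᴴ) - Λ * J * Λᴴ * βᴴ) := by
  have hJJ' (X : Matrix m n ℂ) : J * (J * X) = X := by rw [← Matrix.mul_assoc, hJJ, Matrix.one_mul]
  simp only [conjTranspose_add, conjTranspose_smul, conjTranspose_mul, hJ, Complex.star_def,
    Complex.conj_I, neg_smul, Matrix.mul_add, Matrix.add_mul, Matrix.mul_neg, Matrix.smul_mul,
    Matrix.mul_smul, smul_smul, Complex.I_mul_I, neg_neg, Matrix.mul_assoc,
    hJJ', smul_add, smul_sub, neg_add, one_smul]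
  abel

theorem discrete_identity_propagation_general
    {n m₁ m₂ : ℕ} (α : Matrix (Fin n) (Fin n) ℂ) (hα : IsUnit α)
    (S₀ : Matrix (Fin n) (Fin n) ℂ)
    (Λ₀ : Matrix (Fin n) (Fin m₁ ⊕ Fin m₂) ℂ)
    (h0 : α * S₀ - S₀ * αᴴ = Complex.I • (Λ₀ * Λ₀ᴴ))
    (Λ : ℕ → Matrix (Fin n) (Fin m₁ ⊕ Fin m₂) ℂ)
    (hΛ0 : Λ 0 = Λ₀)
    (hΛ : ∀ k : ℕ, Λ (k + 1) = Λ k + Complex.I • (α⁻¹ * Λ k * sigJ m₁ m₂))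
    (S : ℕ → Matrix (Fin n) (Fin n) ℂ)
    (hS0 : S 0 = S₀)
    (hS : ∀ k : ℕ, S (k + 1) =
      S k + α⁻¹ * S k * (α⁻¹)ᴴ + α⁻¹ * (Λ k * sigJ m₁ m₂ * (Λ k)ᴴ) * (α⁻¹)ᴴ) :
    ∀ k : ℕ, α * S k - S k * αᴴ = Complex.I • (Λ k * (Λ k)ᴴ) := by
  have hdet := (isUnit_iff_isUnit_det α).mp hα
  have hab : α * α⁻¹ = 1 := mul_nonsing_inv α hdet
  have hba : α⁻¹ * α = 1 := nonsing_inv_mul α hdet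
  have ha'b' : αᴴ * (α⁻¹)ᴴ = 1 := by rw [← conjTranspose_mul, hba, conjTranspose_one]
  have hb'a' : (α⁻¹)ᴴ * αᴴ = 1 := by rw [← conjTranspose_mul, hab, conjTranspose_one]
  intro k
  induction k with
  | zero => rw [hS0, hΛ0]; exact h0
  | succ k ih =>
    rw [hS k, hΛ k, mul_conjTranspose_add_I_smul _ _ (sigJ_conjTranspose m₁ m₂)
      (sigJ_mul_self m₁ m₂)]
    exact sub_eq_I_smul_step hab hba ha'b' hb'a' ih

/-- propagation of the identity `αS_k − S_kα* = iΛ_kΛ_k*` along the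
recursions `Λ_{k+1} = Λ_k + iα⁻¹Λ_k j` and `S_{k+1} = S_k + α⁻¹S_kα^{−*} + α⁻¹Λ_k j Λ_k* α^{−*}`. -/
theorem discrete_identity_propagation
    {n m₁ m₂ : ℕ} (α : Matrix (Fin n) (Fin n) ℂ) (hα : IsUnit α)
    (S₀ : Matrix (Fin n) (Fin n) ℂ) (hS₀ : S₀.IsHermitian)
    (Λ₀ : Matrix (Fin n) (Fin m₁ ⊕ Fin m₂) ℂ)
    (h0 : α * S₀ - S₀ * αᴴ = Complex.I • (Λ₀ * Λ₀ᴴ))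
    (Λ : ℕ → Matrix (Fin n) (Fin m₁ ⊕ Fin m₂) ℂ)
    (hΛ0 : Λ 0 = Λ₀)
    (hΛ : ∀ k : ℕ, Λ (k + 1) = Λ k + Complex.I • (α⁻¹ * Λ k * sigJ m₁ m₂))
    (S : ℕ → Matrix (Fin n) (Fin n) ℂ)
    (hS0 : S 0 = S₀)
    (hS : ∀ k : ℕ, S (k + 1) =
      S k + α⁻¹ * S k * (α⁻¹)ᴴ + α⁻¹ * (Λ k * sigJ m₁ m₂ * (Λ k)ᴴ) * (α⁻¹)ᴴ) :
    ∀ k : ℕ, α * S k - S k * αᴴ = Complex.I • (Λ k * (Λ k)ᴴ) :=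
  discrete_identity_propagation_general α hα S₀ Λ₀ h0 Λ hΛ0 hΛ S hS0 hS
end

section
/- For k ∈ ℕ₀ let C_k(t), H_k⁺(t), H_k⁻(t) be m×m-matrix-valued differentiable functions of t ∈ ℝ satisfying, for all t and all k ∈ ℕ₀: (I_m + C_k(t))H_k⁻(t) = H_{k+1}⁻(t)(I_m + C_k(t)) = 0 and (I_m − C_k(t))H_k⁺(t) = H_{k+1}⁺(t)(I_m − C_k(t)) = 0. Define G_k(t, z) = I_m + (i/z)C_k(t) and F_k(t, z) = −H_k⁺(t)/(z + i) − H_k⁻(t)/(z − i). Then for each fixed k and t, the generalized discrete Heisenberg magnet equation i·(d/dt)C_k(t) = (H_{k+1}⁻(t) − H_{k+1}⁺(t))C_k(t) − C_k(t)(H_k⁻(t) − H_k⁺(t)) holds if and only if the compatibility condition (d/dt)G_k(t, z) = F_{k+1}(t, z)G_k(t, z) − G_k(t, z)F_k(t, z) holds for all z ∈ ℂ \ {0, i, −i}. -/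
/-!
On the image of `H⁺` the matrix `C_k` acts as `1`, on that of `H⁻` as `-1` (from the left for
index `k`, from the right for index `k + 1`), so `G_k(z) = 1 + (i/z) C_k` acts there by the
scalars `(z ± i)/z`, which cancel the poles of `F`:
`F_{k+1} G_k - G_k F_k = z⁻¹ ((H⁻_{k+1} - H⁺_{k+1}) C_k - C_k (H⁻_k - H⁺_k))`.
Since also `d G_k/dt = z⁻¹ · i · dC_k/dt`, both sides of the compatibility condition are those of
the magnet equation multiplied by `z⁻¹`.
-/

theorem lax_commutator_eq_smul {K A : Type*} [Field K] [Ring A] [Algebra K A] {C P₀ M₀ P₁ M₁ : A}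
    (hP₀ : (1 - C) * P₀ = 0) (hM₀ : (1 + C) * M₀ = 0)
    (hP₁ : P₁ * (1 - C) = 0) (hM₁ : M₁ * (1 + C) = 0)
    {a z : K} (hz : z ≠ 0) (hza : z ≠ a) (hza' : z ≠ -a) :
    (-((z + a)⁻¹ • P₁) - (z - a)⁻¹ • M₁) * (1 + (a / z) • C)
        - (1 + (a / z) • C) * (-((z + a)⁻¹ • P₀) - (z - a)⁻¹ • M₀) =
      z⁻¹ • ((M₁ - P₁) * C - C * (M₀ - P₀)) := by
  have hCP₀ : C * P₀ = P₀ := (sub_eq_zero.mp (by rwa [sub_mul, one_mul] at hP₀)).symm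
  have hCM₀ : C * M₀ = -M₀ := eq_neg_of_add_eq_zero_right (by rwa [add_mul, one_mul] at hM₀)
  have hP₁C : P₁ * C = P₁ := (sub_eq_zero.mp (by rwa [mul_sub, mul_one] at hP₁)).symm
  have hM₁C : M₁ * C = -M₁ := eq_neg_of_add_eq_zero_right (by rwa [mul_add, mul_one] at hM₁)
  have hadd : z + a ≠ 0 := fun h => hza' (eq_neg_of_add_eq_zero_left h)
  have hsub : z - a ≠ 0 := sub_ne_zero.mpr hza
  simp only [sub_mul, mul_sub, add_mul, mul_add, neg_mul, mul_neg, mul_one, one_mul,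
    smul_mul_assoc, mul_smul_comm, hCP₀, hCM₀, hP₁C, hM₁C]
  match_scalars <;> field_simp <;> ring

theorem dghm_iff_compatibility_general
    {m : ℕ}
    (C Hp Hm : ℕ → ℝ → Matrix (Fin m) (Fin m) ℂ)
    (hm1 : ∀ (k : ℕ) (t : ℝ), (1 + C k t) * Hm k t = 0)
    (hm2 : ∀ (k : ℕ) (t : ℝ), Hm (k + 1) t * (1 + C k t) = 0)
    (hp1 : ∀ (k : ℕ) (t : ℝ), (1 - C k t) * Hp k t = 0)
    (hp2 : ∀ (k : ℕ) (t : ℝ), Hp (k + 1) t * (1 - C k t) = 0)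
    (G : ℕ → ℝ → ℂ → Matrix (Fin m) (Fin m) ℂ)
    (hG : ∀ (k : ℕ) (t : ℝ) (z : ℂ), G k t z = 1 + (Complex.I / z) • C k t)
    (F : ℕ → ℝ → ℂ → Matrix (Fin m) (Fin m) ℂ)
    (hF : ∀ (k : ℕ) (t : ℝ) (z : ℂ),
      F k t z = -((z + Complex.I)⁻¹ • Hp k t) - (z - Complex.I)⁻¹ • Hm k t)
    (k : ℕ) (t : ℝ) :
    (∀ p q : Fin m,
      Complex.I * deriv (fun s : ℝ => C k s p q) t =
        ((Hm (k + 1) t - Hp (k + 1) t) * C k t - C k t * (Hm k t - Hp k t)) p q) ↔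
    (∀ z : ℂ, z ≠ 0 → z ≠ Complex.I → z ≠ -Complex.I →
      ∀ p q : Fin m,
        deriv (fun s : ℝ => G k s z p q) t =
          (F (k + 1) t z * G k t z - G k t z * F k t z) p q) := by
  have hcomm : ∀ z : ℂ, z ≠ 0 → z ≠ Complex.I → z ≠ -Complex.I →
      F (k + 1) t z * G k t z - G k t z * F k t z =
        z⁻¹ • ((Hm (k + 1) t - Hp (k + 1) t) * C k t - C k t * (Hm k t - Hp k t)) := by
    intro z hz hzi hzi'
    rw [hF, hF, hG]
    exact lax_commutator_eq_smul (hp1 k t) (hm1 k t) (hp2 k t) (hm2 k t) hz hzi hzi'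
  have hderiv : ∀ (z : ℂ) (p q : Fin m), deriv (fun s => G k s z p q) t =
      z⁻¹ * (Complex.I * deriv (fun s => C k s p q) t) := by
    intro z p q
    simp only [hG, Matrix.add_apply, Matrix.smul_apply, smul_eq_mul]
    rw [deriv_const_add, deriv_const_mul_field]
    ring
  constructor
  · intro hdghm z hz hzi hzi' p q
    rw [hderiv, hcomm z hz hzi hzi', Matrix.smul_apply, smul_eq_mul, hdghm]
  · intro hcompat p q
    have h1 : (1 : ℂ) ≠ Complex.I := by simp [Complex.ext_iff]
    have h1' : (1 : ℂ) ≠ -Complex.I := by simp [Complex.ext_iff]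
    have h := hcompat 1 one_ne_zero h1 h1' p q
    rwa [hderiv, hcomm 1 one_ne_zero h1 h1', inv_one, one_mul, one_smul] at h

/-- for matrix functions satisfying the annihilation conditions, the
generalized discrete Heisenberg magnet equation
`i C_k' = (H_{k+1}⁻ − H_{k+1}⁺)C_k − C_k(H_k⁻ − H_k⁺)` is equivalent to the compatibility
condition `G_k' = F_{k+1}G_k − G_kF_k` for all `z ∈ ℂ \ {0, i, −i}`,
where `G_k(t,z) = I + (i/z)C_k(t)` and `F_k(t,z) = −H_k⁺(t)/(z+i) − H_k⁻(t)/(z−i)`. -/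
theorem dghm_iff_compatibility
    {m : ℕ}
    (C Hp Hm : ℕ → ℝ → Matrix (Fin m) (Fin m) ℂ)
    (hCdiff : ∀ (k : ℕ) (p q : Fin m), Differentiable ℝ (fun t : ℝ => C k t p q))
    (hHpdiff : ∀ (k : ℕ) (p q : Fin m), Differentiable ℝ (fun t : ℝ => Hp k t p q))
    (hHmdiff : ∀ (k : ℕ) (p q : Fin m), Differentiable ℝ (fun t : ℝ => Hm k t p q))
    (hm1 : ∀ (k : ℕ) (t : ℝ), (1 + C k t) * Hm k t = 0)
    (hm2 : ∀ (k : ℕ) (t : ℝ), Hm (k + 1) t * (1 + C k t) = 0)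
    (hp1 : ∀ (k : ℕ) (t : ℝ), (1 - C k t) * Hp k t = 0)
    (hp2 : ∀ (k : ℕ) (t : ℝ), Hp (k + 1) t * (1 - C k t) = 0)
    (G : ℕ → ℝ → ℂ → Matrix (Fin m) (Fin m) ℂ)
    (hG : ∀ (k : ℕ) (t : ℝ) (z : ℂ), G k t z = 1 + (Complex.I / z) • C k t)
    (F : ℕ → ℝ → ℂ → Matrix (Fin m) (Fin m) ℂ)
    (hF : ∀ (k : ℕ) (t : ℝ) (z : ℂ),
      F k t z = -((z + Complex.I)⁻¹ • Hp k t) - (z - Complex.I)⁻¹ • Hm k t)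
    (k : ℕ) (t : ℝ) :
    (∀ p q : Fin m,
      Complex.I * deriv (fun s : ℝ => C k s p q) t =
        ((Hm (k + 1) t - Hp (k + 1) t) * C k t - C k t * (Hm k t - Hp k t)) p q) ↔
    (∀ z : ℂ, z ≠ 0 → z ≠ Complex.I → z ≠ -Complex.I →
      ∀ p q : Fin m,
        deriv (fun s : ℝ => G k s z p q) t =
          (F (k + 1) t z * G k t z - G k t z * F k t z) p q) :=
  dghm_iff_compatibility_general C Hp Hm hm1 hm2 hp1 hp2 G hG F hF k t
end

section
/- Let Σ = {α, S₀, ϑ₁, ϑ₂} be an admissible quadruple with Λ = [ϑ₁, ϑ₂], and let W_Σ(z) = I_m + iΛ*S₀⁻¹(zI_n − α)⁻¹Λ be its transfer function. Then for every z ∈ ℂ such that neither z nor z̄ is an eigenvalue of α, I_m − W_Σ(z)* W_Σ(z) = i(z − z̄) Λ*(z̄I_n − α*)⁻¹ S₀⁻¹ (zI_n − α)⁻¹ Λ. In particular, for every real λ that is not an eigenvalue of α the matrix W_Σ(λ) is unitary, and for z in the open lower half-plane W_Σ(z)*W_Σ(z) ≤ I_m (so W_Σ is contractive there). -/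
open Matrix
open scoped ComplexOrder

/-!
With `A = zI − α` the admissibility relation becomes `iΛΛ* = (z − z̄)S₀ − (AS₀ − S₀A*)`.
Sandwiching it between `(A⁻¹)*S₀⁻¹` and `S₀⁻¹A⁻¹` turns the term `AS₀ − S₀A*` into
`(A⁻¹)*S₀⁻¹ − S₀⁻¹A⁻¹`, which exactly cancels the cross terms of `W*W` for
`W = 1 + iΛ*S₀⁻¹A⁻¹Λ`. What is left is `1 − W*W = i(z − z̄)·B*S₀⁻¹B` with `B = A⁻¹Λ`; the
factor `i(z − z̄) = −2 Im z` vanishes on the real line and is positive below it.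
-/

theorem star_one_add_I_smul_mul_self {R : Type*} [Ring R] [StarRing R] [Algebra ℂ R]
    [StarModule ℂ R] (x : R) :
    star (1 + Complex.I • x) * (1 + Complex.I • x) =
      1 + Complex.I • (x - star x) + star x * x := by
  simp only [star_add, star_one, star_smul, Complex.star_def, Complex.conj_I, add_mul, mul_add,
    one_mul, mul_one, neg_smul, neg_mul, smul_mul_smul_comm, Complex.I_mul_I, smul_sub, neg_neg,
    one_smul]
  abel

theorem Complex.I_mul_sub_conj (z : ℂ) :
    Complex.I * (z - (starRingEnd ℂ) z) = ((-2 * z.im : ℝ) : ℂ) := by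
  rw [Complex.sub_conj]
  push_cast
  linear_combination (2 * (z.im : ℂ)) * Complex.I_sq

section TransferFunction

variable {n m : Type*} [Fintype n] [DecidableEq n] [DecidableEq m]

theorem conjTranspose_inv_mul_inv_mul_sub_mul_inv_mul_inv {A S : Matrix n n ℂ}
    (hA : IsUnit A.det) (hS : IsUnit S.det) :
    A⁻¹ᴴ * S⁻¹ * (A * S - S * Aᴴ) * S⁻¹ * A⁻¹ = A⁻¹ᴴ * S⁻¹ - S⁻¹ * A⁻¹ := by
  have hAh : IsUnit Aᴴ.det := by rwa [det_conjTranspose, isUnit_star]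
  simp only [Matrix.mul_sub, Matrix.sub_mul, Matrix.mul_assoc, mul_nonsing_inv_cancel_left _ _ hS,
    mul_nonsing_inv _ hA, Matrix.mul_one, conjTranspose_nonsing_inv,
    nonsing_inv_mul_cancel_left _ _ hS, nonsing_inv_mul_cancel_left _ _ hAh]

theorem one_sub_conjTranspose_mul_self_of_lyapunov [Fintype m] {A S : Matrix n n ℂ} (L : Matrix n m ℂ)
    (c : ℂ) (hA : IsUnit A.det) (hS : S.IsHermitian) (hSdet : IsUnit S.det)
    (hL : Complex.I • (L * Lᴴ) = c • S - (A * S - S * Aᴴ)) :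
    1 - (1 + Complex.I • (Lᴴ * S⁻¹ * A⁻¹ * L))ᴴ * (1 + Complex.I • (Lᴴ * S⁻¹ * A⁻¹ * L)) =
      (Complex.I * c) • (Lᴴ * A⁻¹ᴴ * S⁻¹ * A⁻¹ * L) := by
  set M := Lᴴ * S⁻¹ * A⁻¹ * L
  have hMh : Mᴴ = Lᴴ * A⁻¹ᴴ * S⁻¹ * L := by
    simp only [M, conjTranspose_mul, conjTranspose_conjTranspose, hS.inv.eq, Matrix.mul_assoc]
  have hMM : Complex.I • (Mᴴ * M) = c • (Lᴴ * A⁻¹ᴴ * S⁻¹ * A⁻¹ * L) - (Mᴴ - M) := calc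
    Complex.I • (Mᴴ * M) = Lᴴ * (A⁻¹ᴴ * S⁻¹ * (Complex.I • (L * Lᴴ)) * S⁻¹ * A⁻¹) * L := by
      rw [hMh]
      simp only [M, Matrix.mul_smul, Matrix.smul_mul, Matrix.mul_assoc]
    _ = Lᴴ * (c • (A⁻¹ᴴ * S⁻¹ * A⁻¹) - (A⁻¹ᴴ * S⁻¹ - S⁻¹ * A⁻¹)) * L := by
      rw [hL, ← conjTranspose_inv_mul_inv_mul_sub_mul_inv_mul_inv hA hSdet]
      simp only [Matrix.mul_sub, Matrix.sub_mul, Matrix.mul_smul, Matrix.smul_mul,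
        Matrix.mul_assoc, mul_nonsing_inv_cancel_left _ _ hSdet]
    _ = c • (Lᴴ * A⁻¹ᴴ * S⁻¹ * A⁻¹ * L) - (Mᴴ - M) := by
      rw [hMh]
      simp only [M, Matrix.mul_sub, Matrix.sub_mul, Matrix.mul_smul, Matrix.smul_mul,
        Matrix.mul_assoc]
  rw [← star_eq_conjTranspose, star_one_add_I_smul_mul_self, star_eq_conjTranspose]
  linear_combination (norm := skip) Complex.I • hMM
  match_scalars <;> simp

theorem smul_one_sub_mul_sub_mul_conjTranspose (α S : Matrix n n ℂ) (z : ℂ) :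
    (z • 1 - α) * S - S * (z • 1 - α)ᴴ = (z - (starRingEnd ℂ) z) • S - (α * S - S * αᴴ) := by
  simp only [conjTranspose_sub, conjTranspose_smul, conjTranspose_one, Complex.star_def,
    Matrix.sub_mul, Matrix.mul_sub, Matrix.smul_mul, Matrix.mul_smul, Matrix.one_mul,
    Matrix.mul_one, sub_smul]
  abel

theorem isUnit_det_smul_one_sub_of_notMem_spectrum {α : Matrix n n ℂ} {z : ℂ}
    (hz : z ∉ spectrum ℂ α) : IsUnit (z • 1 - α).det := by
  rw [spectrum.notMem_iff, Algebra.algebraMap_eq_smul_one] at hz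
  exact (isUnit_iff_isUnit_det _).mp hz

noncomputable def transferFunction (α S : Matrix n n ℂ) (L : Matrix n m ℂ) (z : ℂ) :
    Matrix m m ℂ :=
  1 + Complex.I • (Lᴴ * S⁻¹ * (z • 1 - α)⁻¹ * L)

variable {α S : Matrix n n ℂ} {L : Matrix n m ℂ}

theorem one_sub_conjTranspose_transferFunction_mul_self [Fintype m] (hS : S.IsHermitian)
    (hSdet : IsUnit S.det) (hL : α * S - S * αᴴ = Complex.I • (L * Lᴴ)) {z : ℂ}
    (hz : IsUnit (z • 1 - α).det) :
    1 - (transferFunction α S L z)ᴴ * transferFunction α S L z =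
      (Complex.I * (z - (starRingEnd ℂ) z)) •
        (Lᴴ * (z • 1 - α)⁻¹ᴴ * S⁻¹ * (z • 1 - α)⁻¹ * L) := by
  refine one_sub_conjTranspose_mul_self_of_lyapunov L _ hz hS hSdet ?_
  rw [smul_one_sub_mul_sub_mul_conjTranspose, hL, sub_sub_cancel]

theorem transferFunction_eq_one_of_not_isUnit {z : ℂ} (hz : ¬IsUnit (z • 1 - α).det) :
    transferFunction α S L z = 1 := by
  simp [transferFunction, nonsing_inv_apply_not_isUnit _ hz]

theorem posSemidef_one_sub_conjTranspose_transferFunction_mul_self [Fintype m] (hS : S.PosDef)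
    (hL : α * S - S * αᴴ = Complex.I • (L * Lᴴ)) {z : ℂ} (hz : z.im < 0) :
    (1 - (transferFunction α S L z)ᴴ * transferFunction α S L z).PosSemidef := by
  by_cases hu : IsUnit (z • 1 - α).det
  · rw [one_sub_conjTranspose_transferFunction_mul_self hS.isHermitian hS.det_pos.ne'.isUnit hL
      hu]
    have hc : 0 ≤ Complex.I * (z - (starRingEnd ℂ) z) := by
      rw [Complex.I_mul_sub_conj, Complex.zero_le_real]
      linarith
    have hgram := hS.inv.posSemidef.conjTranspose_mul_mul_same ((z • 1 - α)⁻¹ * L)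
    simp only [conjTranspose_mul, Matrix.mul_assoc] at hgram ⊢
    exact hgram.smul hc
  -- Admissibility keeps the spectrum of `α` in the closed upper half-plane, so this case is
  -- vacuous; it is simpler to use that the junk inverse `0` gives `W z = 1`.
  · rw [transferFunction_eq_one_of_not_isUnit hu, conjTranspose_one, Matrix.one_mul, sub_self]
    exact PosSemidef.zero

end TransferFunction

/-- the transfer function `W_Σ(z) = I + iΛ*S₀⁻¹(zI − α)⁻¹Λ` of an admissible
quadruple satisfies `I − W_Σ(z)*W_Σ(z) = i(z − z̄)Λ*(z̄I − α*)⁻¹S₀⁻¹(zI − α)⁻¹Λ`; it is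
unitary on the real line (off the spectrum of `α`) and contractive in the open lower
half-plane. -/
theorem transfer_function_unitary_and_contractive
    {n m₁ m₂ : ℕ} (α S₀ : Matrix (Fin n) (Fin n) ℂ)
    (θ₁ : Matrix (Fin n) (Fin m₁) ℂ) (θ₂ : Matrix (Fin n) (Fin m₂) ℂ)
    (hadm : Admissible α S₀ θ₁ θ₂)
    (Λ : Matrix (Fin n) (Fin m₁ ⊕ Fin m₂) ℂ) (hΛ : Λ = Matrix.fromCols θ₁ θ₂)
    (W : ℂ → Matrix (Fin m₁ ⊕ Fin m₂) (Fin m₁ ⊕ Fin m₂) ℂ)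
    (hW : ∀ z : ℂ, W z = 1 + Complex.I • (Λᴴ * S₀⁻¹ * (z • 1 - α)⁻¹ * Λ)) :
    (∀ z : ℂ, z ∉ spectrum ℂ α → (starRingEnd ℂ) z ∉ spectrum ℂ α →
      1 - (W z)ᴴ * W z =
        (Complex.I * (z - (starRingEnd ℂ) z)) •
          (Λᴴ * ((starRingEnd ℂ) z • 1 - αᴴ)⁻¹ * S₀⁻¹ * (z • 1 - α)⁻¹ * Λ)) ∧
    (∀ lam : ℝ, (lam : ℂ) ∉ spectrum ℂ α →
      (W (lam : ℂ))ᴴ * W (lam : ℂ) = 1 ∧ W (lam : ℂ) * (W (lam : ℂ))ᴴ = 1) ∧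
    (∀ z : ℂ, z.im < 0 → (1 - (W z)ᴴ * W z).PosSemidef) := by
  obtain ⟨hS, hθ⟩ := hadm
  obtain rfl : W = transferFunction α S₀ Λ := funext hW
  have hL : α * S₀ - S₀ * αᴴ = Complex.I • (Λ * Λᴴ) := by
    rwa [hΛ, conjTranspose_fromCols_eq_fromRows_conjTranspose, fromCols_mul_fromRows]
  have hdefect := fun z (hz : z ∉ spectrum ℂ α) ↦ one_sub_conjTranspose_transferFunction_mul_self
    hS.isHermitian hS.det_pos.ne'.isUnit hL (isUnit_det_smul_one_sub_of_notMem_spectrum hz)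
  refine ⟨fun z hz _ ↦ ?_, fun lam hlam ↦ ?_,
    fun z ↦ posSemidef_one_sub_conjTranspose_transferFunction_mul_self hS hL⟩
  · simp [hdefect z hz, conjTranspose_nonsing_inv, conjTranspose_smul]
  · have hunit := hdefect lam hlam
    rw [Complex.conj_ofReal, sub_self, mul_zero, zero_smul, sub_eq_zero] at hunit
    exact ⟨hunit.symm, mul_eq_one_comm.mp hunit.symm⟩
end
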